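/- The function W₀(ξ) = (e^ξ - 1)²/(e^{ξ/2}√(e^{2ξ}-1)) satisfies the inequality W₀'(ξ) - ((e^{2ξ}+1)/(2(e^{2ξ}-1)))·W₀(ξ) ≥ 0 for all ξ > 0. -/

import Mathlib

/-! Writing `E = e^ξ`, the logarithmic derivative of `W₀` is
`2E/(E-1) - 1/2 - E²/(E²-1)`, which equals `(E²+1)/(2(E²-1)) + 2E/(E²-1)`.
Hence `W₀' - (E²+1)/(2(E²-1)) · W₀ = 2E/(E²-1) · W₀`, which is positive for `ξ > 0`. -/

noncomputable def W₀ (ξ : ℝ) : ℝ :=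
  (Real.exp ξ - 1) ^ 2 / (Real.exp (ξ / 2) * Real.sqrt (Real.exp (2 * ξ) - 1))

open Real

lemma HasDerivAt.div_mul_logDeriv {f g k : ℝ → ℝ} {f' g' k' x : ℝ}
    (hf : HasDerivAt f f' x) (hg : HasDerivAt g g' x) (hk : HasDerivAt k k' x)
    (hf0 : f x ≠ 0) (hg0 : g x ≠ 0) (hk0 : k x ≠ 0) :
    HasDerivAt (fun y => f y / (g y * k y))
      ((f' / f x - g' / g x - k' / k x) * (f x / (g x * k x))) x := by
  refine (hf.div (hg.mul hk) (mul_ne_zero hg0 hk0)).congr_deriv ?_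
  simp only [Pi.mul_apply]
  field_simp
  ring

lemma exp_two_mul_sub_one_pos {x : ℝ} (hx : 0 < x) : 0 < exp (2 * x) - 1 :=
  sub_pos.2 (one_lt_exp_iff.2 (by positivity))

lemma hasDerivAt_sqrt_exp_two_mul_sub_one {x : ℝ} (hx : 0 < x) :
    HasDerivAt (fun y => √(exp (2 * y) - 1)) (exp (2 * x) / √(exp (2 * x) - 1)) x := by
  have hinner : HasDerivAt (fun y => exp (2 * y) - 1) (exp (2 * x) * 2) x :=
    (((hasDerivAt_id x).const_mul 2).exp.sub_const 1).congr_deriv (by simp)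
  refine (hinner.sqrt (exp_two_mul_sub_one_pos hx).ne').congr_deriv ?_
  field_simp

lemma hasDerivAt_W₀ {ξ : ℝ} (hξ : 0 < ξ) :
    HasDerivAt W₀
      ((2 * exp ξ / (exp ξ - 1) - 1 / 2 - exp (2 * ξ) / (exp (2 * ξ) - 1)) * W₀ ξ) ξ := by
  have hE : exp ξ - 1 ≠ 0 := (sub_pos.2 (one_lt_exp_iff.2 hξ)).ne'
  have hE2 := exp_two_mul_sub_one_pos hξ
  have hnum : HasDerivAt (fun y => (exp y - 1) ^ 2) (2 * (exp ξ - 1) * exp ξ) ξ :=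
    (((hasDerivAt_exp ξ).sub_const 1).pow 2).congr_deriv (by norm_num)
  have hhalf : HasDerivAt (fun y => exp (y / 2)) (exp (ξ / 2) / 2) ξ :=
    ((hasDerivAt_id ξ).div_const 2).exp.congr_deriv (by rw [id]; ring)
  refine (hnum.div_mul_logDeriv hhalf (hasDerivAt_sqrt_exp_two_mul_sub_one hξ)
    (pow_ne_zero 2 hE) (exp_pos _).ne' (sqrt_pos.2 hE2).ne').congr_deriv ?_
  unfold W₀
  field_simp
  rw [sq_sqrt hE2.le]

lemma W₀_pos {ξ : ℝ} (hξ : 0 < ξ) : 0 < W₀ ξ := by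
  have hE : 0 < exp ξ - 1 := sub_pos.2 (one_lt_exp_iff.2 hξ)
  have hE2 := exp_two_mul_sub_one_pos hξ
  unfold W₀
  positivity

/-- `W₀' - ((e^{2ξ}+1)/(2(e^{2ξ}-1)))·W₀ ≥ 0` for all `ξ > 0`. -/
theorem W0_inequality (ξ : ℝ) (hξ : 0 < ξ) :
    deriv W₀ ξ - ((Real.exp (2 * ξ) + 1) / (2 * (Real.exp (2 * ξ) - 1))) * W₀ ξ ≥ 0 := by
  have hsq : exp (2 * ξ) = exp ξ ^ 2 := by rw [← exp_nat_mul]; norm_num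
  have hE : exp ξ - 1 ≠ 0 := (sub_pos.2 (one_lt_exp_iff.2 hξ)).ne'
  have hE2 : 0 < exp ξ ^ 2 - 1 := hsq ▸ exp_two_mul_sub_one_pos hξ
  have hlogDeriv : 2 * exp ξ / (exp ξ - 1) - 1 / 2 - exp ξ ^ 2 / (exp ξ ^ 2 - 1) =
      (exp ξ ^ 2 + 1) / (2 * (exp ξ ^ 2 - 1)) + 2 * exp ξ / (exp ξ ^ 2 - 1) := by
    field_simp
    ring
  rw [(hasDerivAt_W₀ hξ).deriv, hsq, hlogDeriv, add_mul, add_sub_cancel_left]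
  have hW := W₀_pos hξ
  positivity
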